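/- Fix u, k, ω, σ > 0 and β > 0, and for λ > 0 define M(β; λ) := ½u²k [ sin(ωβ) exp(−½k²σ²(β + λ^{−1}(1 − e^{−λβ}))) − λ ∫₀^∞ exp(−λα − ½k²σ²(α + β + λ^{−1})) sin(ω(α+β)) sinh((k²σ²/(2λ)) e^{−λ(α+β)}) dα ]. Then M(β; λ) → ½u²k sin(ωβ) exp(−k²σ²β) as λ → 0⁺. -/
import Mathlib

open MeasureTheory Real Set

/-- The paper's leading-order Stokes'-drift kernel `M(β)` for the elastic dumbbell,
with wave amplitude `u`, wavenumber `k`, frequency `ω`, noise strength `σ`,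
and spring constant `l` (the paper's `λ`). -/
noncomputable def stokesKernel (u k ω σ l β : ℝ) : ℝ :=
  (1 / 2) * u ^ 2 * k *
    (Real.sin (ω * β) *
        Real.exp (-(k ^ 2 * σ ^ 2 / 2) * (β + l⁻¹ * (1 - Real.exp (-(l * β))))) -
      l * ∫ α in Ioi (0 : ℝ),
        Real.exp (-(l * α) - k ^ 2 * σ ^ 2 / 2 * (α + β + l⁻¹)) * Real.sin (ω * (α + β)) *
          Real.sinh (k ^ 2 * σ ^ 2 / (2 * l) * Real.exp (-(l * (α + β)))))

/-- Weak-spring pointwise limit of the Stokes'-drift kernel: as the spring constant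
tends to zero from above, the kernel tends to that of the weak-spring regime. -/
theorem stokesKernel_tendsto_weak_spring (u k ω σ β : ℝ)
    (hu : 0 < u) (hk : 0 < k) (hω : 0 < ω) (hσ : 0 < σ) (hβ : 0 < β) :
    Filter.Tendsto (fun l : ℝ => stokesKernel u k ω σ l β) (nhdsWithin 0 (Ioi 0))
      (nhds ((1 / 2) * u ^ 2 * k * Real.sin (ω * β) *
        Real.exp (-(k ^ 2 * σ ^ 2) * β))) := by
  set c : ℝ := k ^ 2 * σ ^ 2 / 2 with hc
  have hcpos : 0 < c := by positivity
  -- Part 1: the slope limit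
  have hd : HasDerivAt (fun l : ℝ => Real.exp (-(l * β))) (-β) 0 := by
    have h1 : HasDerivAt (fun l : ℝ => -(l * β)) (-(1 * β)) 0 :=
      ((hasDerivAt_id (0 : ℝ)).mul_const β).neg
    have := h1.exp
    simpa using this
  have hslope : Filter.Tendsto (fun l : ℝ => l⁻¹ * (1 - Real.exp (-(l * β))))
      (nhdsWithin 0 (Ioi 0)) (nhds β) := by
    have := hasDerivAt_iff_tendsto_slope.mp hd
    have h2 : Filter.Tendsto (slope (fun l : ℝ => Real.exp (-(l * β))) 0)
        (nhdsWithin 0 (Ioi 0)) (nhds (-β)) :=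
      this.mono_left (nhdsWithin_mono 0 (fun x hx => ne_of_gt hx))
    have h3 := h2.neg
    rw [neg_neg] at h3
    refine h3.congr (fun l => ?_)
    simp [slope_def_field, div_eq_inv_mul]
    ring
  -- Part 1: first term
  have hA : Filter.Tendsto (fun l : ℝ => Real.sin (ω * β) *
      Real.exp (-c * (β + l⁻¹ * (1 - Real.exp (-(l * β))))))
      (nhdsWithin 0 (Ioi 0)) (nhds (Real.sin (ω * β) * Real.exp (-c * (β + β)))) := by
    have h4 : Filter.Tendsto (fun l : ℝ => -c * (β + l⁻¹ * (1 - Real.exp (-(l * β)))))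
        (nhdsWithin 0 (Ioi 0)) (nhds (-c * (β + β))) :=
      (tendsto_const_nhds.add hslope).const_mul (-c)
    exact ((Real.continuous_exp.tendsto _).comp h4).const_mul _
  -- Part 2: the integral term
  set I : ℝ → ℝ := fun l => ∫ α in Ioi (0 : ℝ),
      Real.exp (-(l * α) - c * (α + β + l⁻¹)) * Real.sin (ω * (α + β)) *
        Real.sinh (k ^ 2 * σ ^ 2 / (2 * l) * Real.exp (-(l * (α + β)))) with hI
  have hg : IntegrableOn (fun α : ℝ => (1 / 2) * Real.exp (-c * α)) (Ioi 0) := by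
    exact (exp_neg_integrableOn_Ioi 0 hcpos).const_mul _
  set G : ℝ := ∫ α in Ioi (0 : ℝ), (1 / 2) * Real.exp (-c * α) with hG
  have hIle : ∀ l : ℝ, 0 < l → ‖I l‖ ≤ G := by
    intro l hl
    refine MeasureTheory.norm_integral_le_of_norm_le hg ?_
    filter_upwards [ae_restrict_mem measurableSet_Ioi] with α hα
    have hα0 : (0 : ℝ) < α := hα
    have harg : k ^ 2 * σ ^ 2 / (2 * l) * Real.exp (-(l * (α + β))) ≤ c / l := by
      rw [hc]
      have h1 : Real.exp (-(l * (α + β))) ≤ 1 := by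
        apply Real.exp_le_one_iff.mpr
        nlinarith
      have h2 : k ^ 2 * σ ^ 2 / (2 * l) = (k ^ 2 * σ ^ 2 / 2) / l := by ring
      rw [h2]
      nlinarith [div_pos (by positivity : (0:ℝ) < k ^ 2 * σ ^ 2 / 2) hl]
    have hargpos : 0 ≤ k ^ 2 * σ ^ 2 / (2 * l) * Real.exp (-(l * (α + β))) := by positivity
    have hsinh : Real.sinh (k ^ 2 * σ ^ 2 / (2 * l) * Real.exp (-(l * (α + β)))) ≤
        Real.exp (c / l) / 2 := by
      rw [Real.sinh_eq]
      have := Real.exp_pos (-(k ^ 2 * σ ^ 2 / (2 * l) * Real.exp (-(l * (α + β)))))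
      have := Real.exp_le_exp.mpr harg
      linarith
    have hexp : Real.exp (-(l * α) - c * (α + β + l⁻¹)) ≤ Real.exp (-c * α - c / l) := by
      apply Real.exp_le_exp.mpr
      have : c * l⁻¹ = c / l := by rw [div_eq_mul_inv]
      nlinarith [mul_pos hl hα0, mul_pos hcpos hβ]
    rw [Real.norm_eq_abs, abs_mul, abs_mul]
    have hsinhnn : 0 ≤ Real.sinh (k ^ 2 * σ ^ 2 / (2 * l) * Real.exp (-(l * (α + β)))) := by
      rw [Real.sinh_eq]
      have := Real.exp_le_exp.mpr (neg_le_self hargpos)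
      linarith
    rw [abs_of_nonneg (Real.exp_pos _).le, abs_of_nonneg hsinhnn]
    have hsin : |Real.sin (ω * (α + β))| ≤ 1 := Real.abs_sin_le_one _
    calc Real.exp (-(l * α) - c * (α + β + l⁻¹)) * |Real.sin (ω * (α + β))| *
          Real.sinh (k ^ 2 * σ ^ 2 / (2 * l) * Real.exp (-(l * (α + β))))
        ≤ Real.exp (-c * α - c / l) * 1 * (Real.exp (c / l) / 2) := by
          gcongr <;> first | exact (Real.exp_pos _).le | skip
      _ = (1 / 2) * Real.exp (-c * α) := by
          rw [Real.exp_sub]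
          field_simp
  have hGnn : 0 ≤ G := by
    apply integral_nonneg
    intro α
    positivity
  have hB : Filter.Tendsto (fun l : ℝ => l * I l) (nhdsWithin 0 (Ioi 0)) (nhds 0) := by
    apply squeeze_zero_norm' (a := fun l => l * G)
    · filter_upwards [self_mem_nhdsWithin] with l (hl : (0:ℝ) < l)
      rw [norm_mul, Real.norm_eq_abs, abs_of_pos hl]
      exact mul_le_mul_of_nonneg_left (hIle l hl) hl.le
    · have : Filter.Tendsto (fun l : ℝ => l * G) (nhds 0) (nhds (0 * G)) :=
        (continuous_id.mul continuous_const).tendsto 0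
      rw [zero_mul] at this
      exact this.mono_left nhdsWithin_le_nhds
  have hfinal := ((hA.sub hB).const_mul ((1 : ℝ) / 2 * u ^ 2 * k))
  rw [sub_zero] at hfinal
  have hpt : ∀ l : ℝ, stokesKernel u k ω σ l β =
      (1 / 2) * u ^ 2 * k * (Real.sin (ω * β) *
        Real.exp (-c * (β + l⁻¹ * (1 - Real.exp (-(l * β))))) - l * I l) := by
    intro l
    simp only [stokesKernel, hI, hc]
  have hval : (1 : ℝ) / 2 * u ^ 2 * k * Real.sin (ω * β) * Real.exp (-(k ^ 2 * σ ^ 2) * β)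
      = 1 / 2 * u ^ 2 * k * (Real.sin (ω * β) * Real.exp (-c * (β + β))) := by
    rw [show -c * (β + β) = -(k ^ 2 * σ ^ 2) * β by rw [hc]; ring]
    ring
  refine Filter.Tendsto.congr (fun l => (hpt l).symm) ?_
  rw [hval]
  exact hfinal
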